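/- Napoleon's theorem: if equilateral triangles are constructed outward on the sides of an arbitrary triangle in the complex plane, then the centroids of these three equilateral triangles form an equilateral triangle. -/

import Mathlib

/-!
The centroid of the equilateral triangle erected on the side `z_j z_{j+1}` is `a z_j + b z_{j+1}`
with `a = 1/2 + i√3/6`, `b = 1/2 - i√3/6`. The quadratic form
`w0² + w1² + w2² - w0 w1 - w1 w2 - w2 w0`, which vanishes exactly on equilateral triangles, is
multiplied by `a² - a b + b²` under such a cyclic combination, and
`a² - a b + b² = 1/4 + (i√3)²/12 = 0`.
-/

section EquilateralForm

variable {R : Type*} [CommRing R]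

/-- Factors as `(w0 + ω w1 + ω² w2) (w0 + ω² w1 + ω w2)` for a primitive cube root of unity
`ω`. -/
def equilateralForm (w0 w1 w2 : R) : R :=
  w0 ^ 2 + w1 ^ 2 + w2 ^ 2 - w0 * w1 - w1 * w2 - w2 * w0

theorem equilateralForm_cyclic_combination (a b z0 z1 z2 : R) :
    equilateralForm (a * z0 + b * z1) (a * z1 + b * z2) (a * z2 + b * z0) =
      (a ^ 2 - a * b + b ^ 2) * equilateralForm z0 z1 z2 := by
  unfold equilateralForm
  ring

end EquilateralForm

section Field

variable {K : Type*} [Field K]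

theorem mul_add_mul_add_mul_eq_sq_div_three_of_equilateralForm_eq_zero (h3 : (3 : K) ≠ 0)
    {w0 w1 w2 : K} (hw : equilateralForm w0 w1 w2 = 0) :
    w0 * w1 + w1 * w2 + w0 * w2 = (w0 + w1 + w2) ^ 2 / 3 := by
  unfold equilateralForm at hw
  field_simp
  linear_combination -hw

theorem sq_sub_mul_add_sq_eq_zero_of_sq_eq_neg_three (h2 : (2 : K) ≠ 0) (h3 : (3 : K) ≠ 0)
    {t : K} (ht : t ^ 2 = -3) :
    (1 / 2 + t / 6) ^ 2 - (1 / 2 + t / 6) * (1 / 2 - t / 6) + (1 / 2 - t / 6) ^ 2 = 0 := by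
  have h6 : (6 : K) ≠ 0 := by
    rw [show (6 : K) = 2 * 3 by norm_num]
    exact mul_ne_zero h2 h3
  field_simp
  linear_combination 12 * ht

end Field

/-- Napoleon's theorem: the centroids of the outward equilateral triangles erected
on the sides of an arbitrary triangle form an equilateral triangle
(equilaterality expressed by `w0*w1 + w1*w2 + w0*w2 = (w0+w1+w2)^2/3`). -/
theorem stmt_1 (z0 z1 z2 : ℂ) (c0 c1 c2 : ℂ)
    (hc0 : c0 = (z0 + ((z0 + z1) / 2 + Complex.I * (Real.sqrt 3 : ℂ) * (z0 - z1) / 2) + z1) / 3)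
    (hc1 : c1 = (z1 + ((z1 + z2) / 2 + Complex.I * (Real.sqrt 3 : ℂ) * (z1 - z2) / 2) + z2) / 3)
    (hc2 : c2 = (z2 + ((z2 + z0) / 2 + Complex.I * (Real.sqrt 3 : ℂ) * (z2 - z0) / 2) + z0) / 3) :
    c0 * c1 + c1 * c2 + c0 * c2 = (c0 + c1 + c2) ^ 2 / 3 := by
  set t : ℂ := Complex.I * (Real.sqrt 3 : ℂ)
  have ht : t ^ 2 = -3 := by
    rw [mul_pow, Complex.I_sq, ← Complex.ofReal_pow, Real.sq_sqrt (by norm_num)]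
    push_cast
    ring
  have centroid (u v : ℂ) :
      (u + ((u + v) / 2 + t * (u - v) / 2) + v) / 3 =
        (1 / 2 + t / 6) * u + (1 / 2 - t / 6) * v := by
    ring
  rw [centroid] at hc0 hc1 hc2
  subst hc0 hc1 hc2
  apply mul_add_mul_add_mul_eq_sq_div_three_of_equilateralForm_eq_zero three_ne_zero
  rw [equilateralForm_cyclic_combination,
    sq_sub_mul_add_sq_eq_zero_of_sq_eq_neg_three two_ne_zero three_ne_zero ht, zero_mul]
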